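/- Let n ≥ 2, let f : [0, ∞) → ℝ be non-negative and locally Lipschitz with f(s) ≤ B'(1 + s^{q₁}) for all s ≥ 0, for some constants B' > 0 and q₁ ∈ (0, 1), and let κ ∈ C¹(closure B₁) be non-negative. Then there exists a constant C > 0, depending only on n, q₁, B', and ‖κ‖_{L^∞(B₁)}, such that any solution u ∈ C²(B₁) ∩ C⁰(closure B₁) of −Δu = κ f(u) in B₁, u > 0 in B₁, u = 0 on ∂B₁, satisfies ‖u‖_{L^∞(B₁)} ≤ C. -/

import Mathlib

/-!
Write `M` for the supremum of `u`. The source term obeys `κ f(u) ≤ K B' (1 + M ^ q₁) =: A`, so the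
maximum principle, applied to `u + c ‖x‖²` with `2 n c > A` (strictly subharmonic, hence without
interior maximum), compares `u` with the torsion function `A (1 - ‖x‖²) / (2 n)`. This gives
`M ≤ K B' (1 + M ^ q₁) / (2 n)`, and since `q₁ < 1` the right-hand side grows sublinearly in `M`,
which bounds `M` in terms of `n`, `q₁`, `B'` and `K` alone.
-/

open Metric Set MeasureTheory Filter
open scoped Pointwise ENNReal NNReal

noncomputable section

/-- The Laplacian of a function `u : ℝⁿ → ℝ`. -/
def lap {n : ℕ} (u : EuclideanSpace ℝ (Fin n) → ℝ) (x : EuclideanSpace ℝ (Fin n)) : ℝ :=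
  ∑ i, fderiv ℝ (fun y => fderiv ℝ u y (EuclideanSpace.single i 1)) x (EuclideanSpace.single i 1)

/-- The radial derivative `∂_r v (x) = (x/|x|) ⬝ ∇v(x)`. -/
def radDeriv {n : ℕ} (v : EuclideanSpace ℝ (Fin n) → ℝ) (x : EuclideanSpace ℝ (Fin n)) : ℝ :=
  (inner ℝ (‖x‖⁻¹ • x) (gradient v x) : ℝ)

/-- The angular gradient `∇^T v (x) = ∇v(x) - (∂_r v(x)) x/|x|`. -/
def angGrad {n : ℕ} (v : EuclideanSpace ℝ (Fin n) → ℝ) (x : EuclideanSpace ℝ (Fin n)) :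
    EuclideanSpace ℝ (Fin n) :=
  gradient v x - radDeriv v x • (‖x‖⁻¹ • x)

/-- Sup of `|v|` over a set, i.e. the `L^∞` norm of a continuous function. -/
def supAbsOn {n : ℕ} (s : Set (EuclideanSpace ℝ (Fin n))) (v : EuclideanSpace ℝ (Fin n) → ℝ) : ℝ :=
  ⨆ x : s, |v x.1|

/-- The deficit `def(κ) = ‖∇^T κ‖_{L^∞(B₁)} + ‖∂_r⁺ κ‖_{L^∞(B₁)}`. -/
def deficit {n : ℕ} (κ : EuclideanSpace ℝ (Fin n) → ℝ) : ℝ :=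
  (⨆ x : (ball (0 : EuclideanSpace ℝ (Fin n)) 1 \ {0} : Set (EuclideanSpace ℝ (Fin n))),
      ‖angGrad κ x.1‖) +
  (⨆ x : (ball (0 : EuclideanSpace ℝ (Fin n)) 1 \ {0} : Set (EuclideanSpace ℝ (Fin n))),
      max (radDeriv κ x.1) 0)

open scoped Topology

theorem IsLocalMax.deriv_deriv_nonpos {g : ℝ → ℝ} {t₀ : ℝ} (hmax : IsLocalMax g t₀)
    (hg : ContinuousAt g t₀) : deriv (deriv g) t₀ ≤ 0 := by
  by_contra! hpos
  -- The second derivative test makes `t₀` also a local minimum, so `g` is locally constant.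
  have hmin := isLocalMin_of_deriv_deriv_pos hpos hmax.deriv_eq_zero hg
  have hconst : g =ᶠ[𝓝 t₀] fun _ => g t₀ :=
    (hmax.and hmin).mono fun t ht => le_antisymm ht.1 ht.2
  have hderiv : deriv g =ᶠ[𝓝 t₀] fun _ => 0 :=
    hconst.eventuallyEq_nhds.mono fun t ht => by rw [ht.deriv_eq, deriv_const]
  rw [hderiv.deriv_eq, deriv_const] at hpos
  exact hpos.false

theorem ContDiffAt.differentiableAt_fderiv_apply {E F : Type*} [NormedAddCommGroup E]
    [NormedSpace ℝ E] [NormedAddCommGroup F] [NormedSpace ℝ F] {u : E → F} {x : E}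
    (hu : ContDiffAt ℝ 2 u x) (v : E) : DifferentiableAt ℝ (fun y => fderiv ℝ u y v) x :=
  ((hu.fderiv_right le_rfl).differentiableAt one_ne_zero).clm_apply (differentiableAt_const v)

theorem IsLocalMax.fderiv_fderiv_apply_self_nonpos {E : Type*} [NormedAddCommGroup E]
    [NormedSpace ℝ E] {u : E → ℝ} {x₀ : E} (hmax : IsLocalMax u x₀) (hu : ContDiffAt ℝ 2 u x₀)
    (v : E) : fderiv ℝ (fun y => fderiv ℝ u y v) x₀ v ≤ 0 := by
  set ℓ : ℝ → E := fun t => x₀ + t • v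
  have hℓ : ∀ t, HasDerivAt ℓ v t := fun t =>
    (((hasDerivAt_id t).smul_const v).const_add x₀).congr_deriv (one_smul ℝ v)
  have hℓ0 : ℓ 0 = x₀ := by simp [ℓ]
  rw [← hℓ0] at hmax hu ⊢
  have hderiv : deriv (u ∘ ℓ) =ᶠ[𝓝 0] (fun y => fderiv ℝ u y v) ∘ ℓ := by
    filter_upwards [(hℓ 0).continuousAt.eventually (hu.eventually (by simp))] with t ht
    exact ((ht.differentiableAt two_ne_zero).hasFDerivAt.comp_hasDerivAt t (hℓ t)).deriv
  rw [← ((hu.differentiableAt_fderiv_apply v).hasFDerivAt.comp_hasDerivAt 0 (hℓ 0)).deriv, ← hderiv.deriv_eq]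
  exact (hmax.comp_continuous (hℓ 0).continuousAt).deriv_deriv_nonpos
    (hu.continuousAt.comp (hℓ 0).continuousAt)

section Laplacian

variable {n : ℕ} {u w : EuclideanSpace ℝ (Fin n) → ℝ} {x : EuclideanSpace ℝ (Fin n)}

theorem lap_nonpos_of_isLocalMax (hmax : IsLocalMax u x) (hu : ContDiffAt ℝ 2 u x) :
    lap u x ≤ 0 :=
  Finset.sum_nonpos fun _ _ => hmax.fderiv_fderiv_apply_self_nonpos hu _

theorem lap_add (hu : ContDiffAt ℝ 2 u x) (hw : ContDiffAt ℝ 2 w x) :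
    lap (fun y => u y + w y) x = lap u x + lap w x := by
  rw [lap, lap, lap, ← Finset.sum_add_distrib]
  refine Finset.sum_congr rfl fun i _ => ?_
  set e : EuclideanSpace ℝ (Fin n) := EuclideanSpace.single i 1
  have hsplit : (fun y => fderiv ℝ (fun z => u z + w z) y e)
      =ᶠ[𝓝 x] fun y => fderiv ℝ u y e + fderiv ℝ w y e := by
    filter_upwards [hu.eventually (by simp), hw.eventually (by simp)] with y huy hwy
    rw [fderiv_fun_add (huy.differentiableAt two_ne_zero) (hwy.differentiableAt two_ne_zero),
      add_apply]
  rw [hsplit.fderiv_eq, fderiv_fun_add (hu.differentiableAt_fderiv_apply e)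
    (hw.differentiableAt_fderiv_apply e), add_apply]

theorem lap_const_mul_norm_sq (c : ℝ) : lap (fun y => c * ‖y‖ ^ 2) x = 2 * n * c := by
  have hfderiv : ∀ e y : EuclideanSpace ℝ (Fin n),
      fderiv ℝ (fun z => c * ‖z‖ ^ 2) y e = (2 * c) * innerSL ℝ e y := fun e y => by
    rw [fderiv_const_mul (contDiff_norm_sq ℝ).differentiable_one.differentiableAt, fderiv_norm_sq]
    simp only [Pi.smul_apply, smul_apply, coe_innerSL_apply, real_inner_comm, nsmul_eq_mul,
      Nat.cast_ofNat, smul_eq_mul]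
    ring
  have hsecond : ∀ e : EuclideanSpace ℝ (Fin n),
      fderiv ℝ (fun y => (2 * c) * innerSL ℝ e y) x e = 2 * c * ‖e‖ ^ 2 := fun e => by
    rw [((innerSL ℝ e).hasFDerivAt.const_mul (2 * c)).fderiv]
    simp
  simp only [lap, hfderiv, hsecond, PiLp.norm_single, norm_one, Finset.sum_const,
    Finset.card_univ, Fintype.card_fin, nsmul_eq_mul]
  ring

end Laplacian

section MaximumPrinciple

variable {n : ℕ} {u : EuclideanSpace ℝ (Fin n) → ℝ} {r A : ℝ}

theorem le_mul_sub_norm_sq_of_neg_lap_le {c : ℝ} (hu : ContDiffOn ℝ 2 u (ball 0 r))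
    (hcont : ContinuousOn u (closedBall 0 r)) (hlap : ∀ x ∈ ball 0 r, -lap u x ≤ A)
    (hbdry : ∀ x ∈ sphere 0 r, u x ≤ 0) (hc : A < 2 * n * c) {x : EuclideanSpace ℝ (Fin n)}
    (hx : x ∈ closedBall 0 r) : u x ≤ c * (r ^ 2 - ‖x‖ ^ 2) := by
  have hquad : ContDiff ℝ 2 fun y : EuclideanSpace ℝ (Fin n) => c * ‖y‖ ^ 2 :=
    contDiff_const.mul (contDiff_norm_sq ℝ)
  obtain ⟨x₀, hx₀, hmax⟩ := (isCompact_closedBall 0 r).exists_isMaxOn ⟨x, hx⟩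
    (f := fun y => u y + c * ‖y‖ ^ 2) (hcont.add hquad.continuous.continuousOn)
  -- `u + c ‖·‖²` is strictly subharmonic, so its maximum over the closed ball is on the sphere.
  have hx₀r : ‖x₀‖ = r := by
    by_contra hne
    have hx₀' : x₀ ∈ ball 0 r := mem_ball_zero_iff.2 ((mem_closedBall_zero_iff.1 hx₀).lt_of_ne hne)
    have hu₀ : ContDiffAt ℝ 2 u x₀ := hu.contDiffAt (isOpen_ball.mem_nhds hx₀')
    have hlap₀ := lap_nonpos_of_isLocalMax (hmax.isLocalMax (closedBall_mem_nhds_of_mem hx₀'))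
      (hu₀.add hquad.contDiffAt)
    rw [lap_add hu₀ hquad.contDiffAt, lap_const_mul_norm_sq] at hlap₀
    linarith [hlap x₀ hx₀']
  have hw : u x + c * ‖x‖ ^ 2 ≤ u x₀ + c * ‖x₀‖ ^ 2 := hmax hx
  rw [hx₀r] at hw
  linarith [hbdry x₀ (mem_sphere_zero_iff_norm.2 hx₀r)]

theorem le_div_mul_sub_norm_sq_of_neg_lap_le (hn : 0 < n) (hu : ContDiffOn ℝ 2 u (ball 0 r))
    (hcont : ContinuousOn u (closedBall 0 r)) (hlap : ∀ x ∈ ball 0 r, -lap u x ≤ A)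
    (hbdry : ∀ x ∈ sphere 0 r, u x ≤ 0) {x : EuclideanSpace ℝ (Fin n)}
    (hx : x ∈ closedBall 0 r) : u x ≤ A / (2 * n) * (r ^ 2 - ‖x‖ ^ 2) := by
  have h2n : (0 : ℝ) < 2 * n := by positivity
  refine ge_of_tendsto ((continuous_mul_const _).continuousWithinAt (s := Ioi (A / (2 * n))))
    (eventually_nhdsWithin_of_forall fun c hc => ?_)
  exact le_mul_sub_norm_sq_of_neg_lap_le hu hcont hlap hbdry ((div_lt_iff₀' h2n).1 hc) hx

end MaximumPrinciple

theorem le_max_one_rpow_of_le_mul_one_add_rpow {M D q : ℝ} (hq₀ : 0 ≤ q) (hq₁ : q < 1)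
    (h : M ≤ D * (1 + M ^ q)) : M ≤ max 1 ((2 * D) ^ (1 / (1 - q))) := by
  rcases le_or_gt M 1 with hM | hM
  · exact hM.trans (le_max_left _ _)
  have hM₀ : 0 < M := one_pos.trans hM
  have hMq : 0 < M ^ q := Real.rpow_pos_of_pos hM₀ q
  -- Since `1 ≤ M ^ q` for `M > 1`, the hypothesis gives `M ≤ 2 D M ^ q`.
  have hMq₁ : M ^ (1 - q) ≤ 2 * D := by
    rw [Real.rpow_sub hM₀, Real.rpow_one, div_le_iff₀ hMq]
    nlinarith [Real.one_le_rpow hM.le hq₀]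
  calc M = (M ^ (1 - q)) ^ (1 / (1 - q)) := by
        rw [← Real.rpow_mul hM₀.le, mul_one_div_cancel (by linarith), Real.rpow_one]
    _ ≤ (2 * D) ^ (1 / (1 - q)) :=
        Real.rpow_le_rpow (Real.rpow_nonneg hM₀.le _) hMq₁ (by bound)
    _ ≤ _ := le_max_right _ _

section SupAbs

variable {n : ℕ} {s : Set (EuclideanSpace ℝ (Fin n))} {v : EuclideanSpace ℝ (Fin n) → ℝ}

theorem abs_le_supAbsOn {t : Set (EuclideanSpace ℝ (Fin n))} (ht : IsCompact t) (hst : s ⊆ t)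
    (hv : ContinuousOn v t) {x : EuclideanSpace ℝ (Fin n)} (hx : x ∈ s) : |v x| ≤ supAbsOn s v := by
  refine le_ciSup (f := fun y : s => |v y|) ?_ ⟨x, hx⟩
  obtain ⟨b, hb⟩ := ht.bddAbove_image hv.abs
  exact ⟨b, forall_mem_range.2 fun y => hb ⟨y, hst y.2, rfl⟩⟩

theorem supAbsOn_le {b : ℝ} (hs : s.Nonempty) (hb : ∀ x ∈ s, |v x| ≤ b) : supAbsOn s v ≤ b :=
  have := hs.to_subtype
  ciSup_le fun x => hb x x.2

end SupAbs

/-- **Step 1 of the proof of Corollary 1.3: uniform upper bound, sublinear case.** If `f` is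
strictly sublinear at infinity, every solution is uniformly bounded above, with a constant
depending only on `n`, `q₁`, `B'`, and `‖κ‖_{L^∞(B₁)}` (bounded by `K`). -/
theorem uniform_upper_bound_sublinear
    (n : ℕ) (hn : 2 ≤ n) (B' q₁ K : ℝ) (hB' : 0 < B') (hq₁ : q₁ ∈ Set.Ioo (0 : ℝ) 1) :
    ∃ C : ℝ, 0 < C ∧
      ∀ (f : ℝ → ℝ) (κ u : EuclideanSpace ℝ (Fin n) → ℝ),
        (∀ s : ℝ, 0 ≤ s → 0 ≤ f s) →
        (∀ M : ℝ, 0 < M → ∃ K' : NNReal, LipschitzOnWith K' f (Set.Icc 0 M)) →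
        (∀ s : ℝ, 0 ≤ s → f s ≤ B' * (1 + s ^ q₁)) →
        ContDiffOn ℝ 1 κ (closure (ball (0 : EuclideanSpace ℝ (Fin n)) 1)) →
        (∀ x ∈ closure (ball (0 : EuclideanSpace ℝ (Fin n)) 1), 0 ≤ κ x) →
        (∀ x ∈ ball (0 : EuclideanSpace ℝ (Fin n)) 1, κ x ≤ K) →
        ContDiffOn ℝ 2 u (ball (0 : EuclideanSpace ℝ (Fin n)) 1) →
        ContinuousOn u (closure (ball (0 : EuclideanSpace ℝ (Fin n)) 1)) →
        (∀ x ∈ ball (0 : EuclideanSpace ℝ (Fin n)) 1, -lap u x = κ x * f (u x)) →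
        (∀ x ∈ ball (0 : EuclideanSpace ℝ (Fin n)) 1, 0 < u x) →
        (∀ x ∈ sphere (0 : EuclideanSpace ℝ (Fin n)) 1, u x = 0) →
        supAbsOn (ball (0 : EuclideanSpace ℝ (Fin n)) 1) u ≤ C := by
  obtain ⟨hq₀, hq₁⟩ := hq₁
  refine ⟨max 1 ((2 * (K * B' / (2 * n))) ^ (1 / (1 - q₁))), one_pos.trans_le (le_max_left _ _),
    fun f κ u hf₀ _ hfB _ hκ₀ hκK hu hucont heq hupos hubdry => ?_⟩
  rw [closure_ball _ one_ne_zero] at hucont hκ₀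
  have h0 : (0 : EuclideanSpace ℝ (Fin n)) ∈ ball 0 1 := mem_ball_self one_pos
  set M := supAbsOn (ball (0 : EuclideanSpace ℝ (Fin n)) 1) u
  have habsM : ∀ x ∈ ball 0 1, |u x| ≤ M := fun x hx =>
    abs_le_supAbsOn (isCompact_closedBall 0 1) ball_subset_closedBall hucont hx
  have huM : ∀ x ∈ ball 0 1, u x ≤ M := fun x hx => (le_abs_self _).trans (habsM x hx)
  have hM₀ : 0 ≤ M := (abs_nonneg _).trans (habsM 0 h0)
  have hK : 0 ≤ K := (hκ₀ 0 (ball_subset_closedBall h0)).trans (hκK 0 h0)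
  have hlap : ∀ x ∈ ball 0 1, -lap u x ≤ K * B' * (1 + M ^ q₁) := fun x hx => by
    have hfM : f (u x) ≤ B' * (1 + M ^ q₁) := by
      refine (hfB _ (hupos x hx).le).trans ?_
      gcongr
      exacts [(hupos x hx).le, huM x hx]
    rw [heq x hx, mul_assoc]
    exact mul_le_mul (hκK x hx) hfM (hf₀ _ (hupos x hx).le) hK
  refine le_max_one_rpow_of_le_mul_one_add_rpow hq₀.le hq₁ (supAbsOn_le ⟨0, h0⟩ fun x hx => ?_)
  rw [abs_of_pos (hupos x hx)]
  calc u x ≤ K * B' * (1 + M ^ q₁) / (2 * n) * (1 ^ 2 - ‖x‖ ^ 2) :=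
        le_div_mul_sub_norm_sq_of_neg_lap_le (by omega) hu hucont hlap
          (fun y hy => (hubdry y hy).le) (ball_subset_closedBall hx)
    _ ≤ K * B' * (1 + M ^ q₁) / (2 * n) := by
        exact mul_le_of_le_one_right (by positivity) (by simp)
    _ = K * B' / (2 * n) * (1 + M ^ q₁) := by ring
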